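/- For any real β > 0, the supremum over x ∈ ℝ of |Φ(βx) - Φ(x)| is at most max(β,1)·|1 - 1/β|/√(2πe), where Φ is the standard normal cumulative distribution function. -/
import Mathlib


open Real MeasureTheory

noncomputable def stdNormalCDF (x : ℝ) : ℝ :=
  ∫ t in Set.Iic x, (Real.sqrt (2 * Real.pi))⁻¹ * Real.exp (-t ^ 2 / 2)

lemma aux_integrable : Integrable (fun t : ℝ => (Real.sqrt (2 * Real.pi))⁻¹ * Real.exp (-t ^ 2 / 2)) := by
  have h := (integrable_exp_neg_mul_sq (by norm_num : (0:ℝ) < 1/2)).const_mul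
    (Real.sqrt (2 * Real.pi))⁻¹
  convert h using 2 with t
  ring_nf

lemma aux_s_exp (s : ℝ) (hs : 0 ≤ s) : s * Real.exp (-s ^ 2 / 2) ≤ Real.exp (-1 / 2) := by
  have h1 : s ≤ Real.exp ((s ^ 2 - 1) / 2) := by
    have := Real.add_one_le_exp ((s ^ 2 - 1) / 2)
    nlinarith [sq_nonneg (s - 1)]
  have h2 : Real.exp ((s ^ 2 - 1) / 2) * Real.exp (-s ^ 2 / 2) = Real.exp (-1 / 2) := by
    rw [← Real.exp_add]; ring_nf
  calc s * Real.exp (-s ^ 2 / 2) ≤ Real.exp ((s ^ 2 - 1) / 2) * Real.exp (-s ^ 2 / 2) := by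
        exact mul_le_mul_of_nonneg_right h1 (Real.exp_nonneg _)
    _ = Real.exp (-1 / 2) := h2

lemma aux_pointwise (β : ℝ) (hβ : 0 < β) (x : ℝ) :
    |stdNormalCDF (β * x) - stdNormalCDF x| ≤
      max β 1 * |1 - 1 / β| / Real.sqrt (2 * Real.pi * Real.exp 1) := by
  set c := min β 1 with hc
  have hc0 : 0 < c := lt_min hβ one_pos
  have hc1 : c ≤ 1 := min_le_right _ _
  have hsqrt : (0:ℝ) < Real.sqrt (2 * Real.pi) := Real.sqrt_pos.2 (by positivity)
  -- rewrite difference as interval integral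
  have hdiff : stdNormalCDF (β * x) - stdNormalCDF x
      = ∫ t in x..(β * x), (Real.sqrt (2 * Real.pi))⁻¹ * Real.exp (-t ^ 2 / 2) := by
    rw [stdNormalCDF, stdNormalCDF]
    exact intervalIntegral.integral_Iic_sub_Iic aux_integrable.integrableOn
      aux_integrable.integrableOn
  set C := (Real.sqrt (2 * Real.pi))⁻¹ * Real.exp (-(c * |x|) ^ 2 / 2) with hC
  have hbound : ∀ t ∈ Set.uIoc x (β * x),
      ‖(Real.sqrt (2 * Real.pi))⁻¹ * Real.exp (-t ^ 2 / 2)‖ ≤ C := by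
    intro t ht
    have ht1 : min x (β * x) < t := ht.1
    have ht2 : t ≤ max x (β * x) := ht.2
    have htsq : (c * |x|) ^ 2 ≤ t ^ 2 := by
      rcases le_or_gt 0 x with hx | hx
      · have h1 : c * x ≤ min x (β * x) := by
          rcases min_cases x (β * x) with ⟨h, _⟩ | ⟨h, _⟩
          · rw [h]; nlinarith
          · rw [h]; nlinarith [min_le_left β 1]
        have : c * |x| ≤ t := by rw [abs_of_nonneg hx]; linarith
        nlinarith [mul_nonneg hc0.le (abs_nonneg x)]
      · have h1 : max x (β * x) ≤ c * x := by
          rcases max_cases x (β * x) with ⟨h, _⟩ | ⟨h, _⟩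
          · rw [h]; nlinarith
          · rw [h]; nlinarith [min_le_left β 1]
        have : t ≤ -(c * |x|) := by rw [abs_of_neg hx]; nlinarith
        nlinarith [mul_nonneg hc0.le (abs_nonneg x)]
    rw [norm_mul, Real.norm_eq_abs, Real.norm_eq_abs, abs_of_nonneg (Real.exp_nonneg _),
      abs_of_nonneg (inv_nonneg.2 hsqrt.le)]
    apply mul_le_mul_of_nonneg_left _ (inv_nonneg.2 hsqrt.le)
    exact Real.exp_le_exp.2 (by linarith)
  have hnorm : |stdNormalCDF (β * x) - stdNormalCDF x| ≤ C * |β * x - x| := by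
    rw [hdiff, ← Real.norm_eq_abs]
    exact intervalIntegral.norm_integral_le_of_norm_le_const hbound
  -- now bound C * |β*x - x|
  have key : C * |β * x - x| ≤ |β - 1| / c * ((Real.sqrt (2 * Real.pi))⁻¹ * Real.exp (-1/2)) := by
    have habs : |β * x - x| = |β - 1| * |x| := by
      rw [← abs_mul]; ring_nf
    rw [habs, hC]
    have h1 : (c * |x|) * Real.exp (-(c * |x|) ^ 2 / 2) ≤ Real.exp (-1 / 2) :=
      aux_s_exp _ (mul_nonneg hc0.le (abs_nonneg x))
    have h2 : |x| * Real.exp (-(c * |x|) ^ 2 / 2) ≤ Real.exp (-1 / 2) / c := by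
      rw [le_div_iff₀ hc0]
      nlinarith
    calc (Real.sqrt (2 * Real.pi))⁻¹ * Real.exp (-(c * |x|) ^ 2 / 2) * (|β - 1| * |x|)
        = |β - 1| * (|x| * Real.exp (-(c * |x|) ^ 2 / 2)) * (Real.sqrt (2 * Real.pi))⁻¹ := by ring
      _ ≤ |β - 1| * (Real.exp (-1 / 2) / c) * (Real.sqrt (2 * Real.pi))⁻¹ := by
          apply mul_le_mul_of_nonneg_right _ (inv_nonneg.2 hsqrt.le)
          exact mul_le_mul_of_nonneg_left h2 (abs_nonneg _)
      _ = |β - 1| / c * ((Real.sqrt (2 * Real.pi))⁻¹ * Real.exp (-1/2)) := by ring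
  have heq1 : |β - 1| / c = max β 1 * |1 - 1 / β| := by
    rcases le_or_gt 1 β with h | h
    · rw [abs_of_nonneg (by linarith), abs_of_nonneg (by
        have : 1 / β ≤ 1 := by rw [div_le_one hβ]; linarith
        linarith), hc, min_eq_right h, max_eq_left h]
      field_simp
    · rw [abs_of_neg (by linarith), abs_of_neg (by
        have : 1 < 1 / β := by rw [lt_div_iff₀ hβ]; linarith
        linarith), hc, min_eq_left h.le, max_eq_right h.le]
      field_simp
  have heq2 : (Real.sqrt (2 * Real.pi))⁻¹ * Real.exp (-1/2)
      = (Real.sqrt (2 * Real.pi * Real.exp 1))⁻¹ := by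
    rw [Real.sqrt_mul (by positivity : (0:ℝ) ≤ 2 * Real.pi) (Real.exp 1), ← Real.exp_half, mul_inv,
      show (-1:ℝ)/2 = -(1/2) by norm_num, Real.exp_neg]
  calc |stdNormalCDF (β * x) - stdNormalCDF x| ≤ C * |β * x - x| := hnorm
    _ ≤ |β - 1| / c * ((Real.sqrt (2 * Real.pi))⁻¹ * Real.exp (-1/2)) := key
    _ = max β 1 * |1 - 1 / β| / Real.sqrt (2 * Real.pi * Real.exp 1) := by
        rw [heq1, heq2]; ring

theorem stmt_4 (β : ℝ) (hβ : 0 < β) :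
    (⨆ x : ℝ, |stdNormalCDF (β * x) - stdNormalCDF x|) ≤
      max β 1 * |1 - 1 / β| / Real.sqrt (2 * Real.pi * Real.exp 1) := by
  exact ciSup_le (aux_pointwise β hβ)
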